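/- arXiv:1803.01153 — 2 statements merged into one kernel-verified Lean document; each statement's English description precedes it below -/
import Mathlib

section
/- Let E = (E_1,…,E_m) and ψ be elements of L²(μ)^m and L²(μ) respectively, let R_1,…,R_m be bounded operators on L²(μ) with adjoints R_jᵗ, and suppose Σ_{j=1}^m R_jᵗ E_j = 0. Set B_j := R_j ψ. Then for every b ∈ L^∞(μ), ∫ (Σ_j E_j B_j) b dμ = Σ_j ∫ ([b, R_j]ψ) E_j dμ, where [b,R_j]f := b·R_j f − R_j(b f). Consequently |∫ (E·B) b dμ| ≤ (Σ_j ‖[b,R_j]‖_{L²→L²}) ‖E‖_{L²} ‖ψ‖_{L²}. -/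
open MeasureTheory
open scoped InnerProductSpace

/-! The integral `∫ (Σ_j E_j B_j) b` is `Σ_j ⟪b R_j ψ, E_j⟫`. Subtracting
`Σ_j ⟪R_j (b ψ), E_j⟫ = ⟪b ψ, Σ_j R_jᵗ E_j⟫ = 0` turns it into the commutator pairing, and
Cauchy–Schwarz with the operator norms of the commutators gives the bound. -/

section InnerProductSpace

variable {H : Type*} [NormedAddCommGroup H] [InnerProductSpace ℝ H] {ι : Type*} [Fintype ι]

theorem norm_le_sqrt_sum_sq_norm {E : Type*} [SeminormedAddCommGroup E] (v : ι → E) (j : ι) :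
    ‖v j‖ ≤ √(∑ i, ‖v i‖ ^ 2) :=
  Real.le_sqrt_of_sq_le (Finset.single_le_sum (fun i _ => sq_nonneg ‖v i‖) (Finset.mem_univ j))

theorem sum_inner_apply_eq_zero_of_sum_adjoint_eq_zero (R Rt : ι → H →L[ℝ] H)
    (hadj : ∀ j f g, ⟪R j f, g⟫_ℝ = ⟪f, Rt j g⟫_ℝ) {E : ι → H} (hdiv : ∑ j, Rt j (E j) = 0)
    (f : H) : ∑ j, ⟪R j f, E j⟫_ℝ = 0 := by
  simp_rw [hadj, ← inner_sum, hdiv, inner_zero_right]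

theorem sum_inner_commutator_eq_sum_inner (M : H →L[ℝ] H) (R Rt : ι → H →L[ℝ] H)
    (hadj : ∀ j f g, ⟪R j f, g⟫_ℝ = ⟪f, Rt j g⟫_ℝ) {E : ι → H} (hdiv : ∑ j, Rt j (E j) = 0)
    (ψ : H) : ∑ j, ⟪(M.comp (R j) - (R j).comp M) ψ, E j⟫_ℝ = ∑ j, ⟪M (R j ψ), E j⟫_ℝ := by
  simp only [sub_apply, ContinuousLinearMap.comp_apply, inner_sub_left,
    Finset.sum_sub_distrib, sum_inner_apply_eq_zero_of_sum_adjoint_eq_zero R Rt hadj hdiv,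
    sub_zero]

theorem abs_sum_inner_apply_le (C : ι → H →L[ℝ] H) (E : ι → H) (ψ : H) :
    |∑ j, ⟪C j ψ, E j⟫_ℝ| ≤ (∑ j, ‖C j‖) * √(∑ j, ‖E j‖ ^ 2) * ‖ψ‖ := by
  rw [Finset.sum_mul, Finset.sum_mul]
  refine (Finset.abs_sum_le_sum_abs _ _).trans (Finset.sum_le_sum fun j _ => ?_)
  calc |⟪C j ψ, E j⟫_ℝ| ≤ ‖C j ψ‖ * ‖E j‖ := abs_real_inner_le_norm _ _
    _ ≤ (‖C j‖ * ‖ψ‖) * √(∑ i, ‖E i‖ ^ 2) :=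
      mul_le_mul ((C j).le_opNorm ψ) (norm_le_sqrt_sum_sq_norm E j) (norm_nonneg _)
        (by positivity)
    _ = ‖C j‖ * √(∑ i, ‖E i‖ ^ 2) * ‖ψ‖ := by ring

end InnerProductSpace

namespace MeasureTheory.L2

variable {X : Type*} [MeasurableSpace X] {μ : Measure X}

theorem integral_mul_eq_inner (f g : Lp ℝ 2 μ) :
    ∫ x, (f : X → ℝ) x * (g : X → ℝ) x ∂μ = ⟪f, g⟫_ℝ := by
  simp [inner_def, mul_comm]

theorem integrable_mul (f g : Lp ℝ 2 μ) :
    Integrable (fun x => (f : X → ℝ) x * (g : X → ℝ) x) μ := by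
  simpa [mul_comm] using integrable_inner (𝕜 := ℝ) f g

theorem integral_sum_mul_mul_eq_sum_inner {ι : Type*} [Fintype ι] (E F : ι → Lp ℝ 2 μ)
    {b : X → ℝ} {M : Lp ℝ 2 μ → Lp ℝ 2 μ} (hM : ∀ f, (M f : X → ℝ) =ᵐ[μ] fun x => b x * f x) :
    ∫ x, (∑ j, (E j : X → ℝ) x * (F j : X → ℝ) x) * b x ∂μ = ∑ j, ⟪M (F j), E j⟫_ℝ := by
  have hterm (j : ι) : (fun x => (E j : X → ℝ) x * (F j : X → ℝ) x * b x)
      =ᵐ[μ] fun x => (M (F j) : X → ℝ) x * (E j : X → ℝ) x := by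
    filter_upwards [hM (F j)] with x hx
    rw [hx]
    ring
  simp_rw [Finset.sum_mul]
  rw [integral_finsetSum _ fun j _ => (integrable_mul _ _).congr (hterm j).symm]
  simp_rw [integral_congr_ae (hterm _), integral_mul_eq_inner]

end MeasureTheory.L2

theorem div_curl_pairing_general {X : Type*} [MeasurableSpace X] (μ : Measure X)
    {m : ℕ} (E : Fin m → Lp ℝ 2 μ) (ψ : Lp ℝ 2 μ)
    (R Rt : Fin m → (Lp ℝ 2 μ →L[ℝ] Lp ℝ 2 μ))
    (hadj : ∀ (j : Fin m) (f g : Lp ℝ 2 μ), ⟪R j f, g⟫_ℝ = ⟪f, Rt j g⟫_ℝ)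
    (hdiv : ∑ j, Rt j (E j) = 0)
    (b : X → ℝ)
    (Mb : Lp ℝ 2 μ →L[ℝ] Lp ℝ 2 μ)
    (hMb : ∀ f : Lp ℝ 2 μ, (Mb f : X → ℝ) =ᵐ[μ] fun x => b x * f x) :
    (∫ x, (∑ j, (E j : X → ℝ) x * (R j ψ : X → ℝ) x) * b x ∂μ)
        = ∑ j, ∫ x, ((Mb.comp (R j) - (R j).comp Mb) ψ : X → ℝ) x * (E j : X → ℝ) x ∂μ ∧
    |∫ x, (∑ j, (E j : X → ℝ) x * (R j ψ : X → ℝ) x) * b x ∂μ|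
        ≤ (∑ j, ‖Mb.comp (R j) - (R j).comp Mb‖) * Real.sqrt (∑ j, ‖E j‖ ^ 2) * ‖ψ‖ := by
  have hpairing : (∫ x, (∑ j, (E j : X → ℝ) x * (R j ψ : X → ℝ) x) * b x ∂μ)
      = ∑ j, ⟪(Mb.comp (R j) - (R j).comp Mb) ψ, E j⟫_ℝ := by
    rw [L2.integral_sum_mul_mul_eq_sum_inner E (fun j => R j ψ) hMb,
      sum_inner_commutator_eq_sum_inner Mb R Rt hadj hdiv]
  simp_rw [L2.integral_mul_eq_inner]
  exact ⟨hpairing, hpairing ▸ abs_sum_inner_apply_le _ E ψ⟩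

/-- if `E = (E_1,…,E_m)`, `ψ ∈ L²(μ)`, `R_j` are bounded operators on
`L²(μ)` with adjoints `R_jᵗ`, `Σ_j R_jᵗ E_j = 0`, and `B_j := R_j ψ`, then for every
bounded `b` (acting by multiplication via `Mb`),
`∫ (Σ_j E_j B_j) b dμ = Σ_j ∫ ([b,R_j]ψ) E_j dμ`, and consequently
`|∫ (E·B) b dμ| ≤ (Σ_j ‖[b,R_j]‖) ‖E‖_{L²} ‖ψ‖_{L²}`. -/
theorem div_curl_pairing {X : Type*} [MeasurableSpace X] (μ : Measure X) [SigmaFinite μ]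
    {m : ℕ} (E : Fin m → Lp ℝ 2 μ) (ψ : Lp ℝ 2 μ)
    (R Rt : Fin m → (Lp ℝ 2 μ →L[ℝ] Lp ℝ 2 μ))
    (hadj : ∀ (j : Fin m) (f g : Lp ℝ 2 μ), ⟪R j f, g⟫_ℝ = ⟪f, Rt j g⟫_ℝ)
    (hdiv : ∑ j, Rt j (E j) = 0)
    (b : X → ℝ) (hb : MemLp b ⊤ μ)
    (Mb : Lp ℝ 2 μ →L[ℝ] Lp ℝ 2 μ)
    (hMb : ∀ f : Lp ℝ 2 μ, (Mb f : X → ℝ) =ᵐ[μ] fun x => b x * f x) :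
    (∫ x, (∑ j, (E j : X → ℝ) x * (R j ψ : X → ℝ) x) * b x ∂μ)
        = ∑ j, ∫ x, ((Mb.comp (R j) - (R j).comp Mb) ψ : X → ℝ) x * (E j : X → ℝ) x ∂μ ∧
    |∫ x, (∑ j, (E j : X → ℝ) x * (R j ψ : X → ℝ) x) * b x ∂μ|
        ≤ (∑ j, ‖Mb.comp (R j) - (R j).comp Mb‖) * Real.sqrt (∑ j, ‖E j‖ ^ 2) * ‖ψ‖ :=
  div_curl_pairing_general μ E ψ R Rt hadj hdiv b Mb hMb
end

section
/- Let K: G × G → ℝ be a kernel satisfying the homogeneity K(δ_r g_1, δ_r g_2) = r^{-Q} K(g_1, g_2) and left-invariance K(h∘g_1, h∘g_2) = K(g_1, g_2) for all h, and suppose K is continuous on {g_1 ≠ g_2} with K(g̃_0, e) ≠ 0 for some g̃_0 with ρ(g̃_0) = 1. Then there exist ε₀ > 0 and c > 0 such that for all 0 < η ≤ ε₀, every g ∈ G and every r > 0, there exists g_* with ρ(g, g_*) = r (namely g_* = g ∘ δ_r(g̃_0^{-1})) such that |K(g_1, g_2)| ≥ c r^{-Q} for all g_1 ∈ B(g, ηr)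 and all g_2 ∈ B(g_*, ηr), and K(g_1,g_2) has constant sign on B(g, ηr) × B(g_*, ηr). -/
/-!
Change variables by `Φ = rescale δ g r`, i.e. `Φ(x) = δ_{1/r}(g⁻¹ x)`. Left invariance and
homogeneity give `K(g₁, g₂) = r^{-Q} K(Φ g₁, Φ g₂)`, while `Φ` divides `ρ`-distances by `r` and
sends `g` to `e` and `g_*` to `g̃₀⁻¹`. So the two balls of radius `ηr` become the balls of radius
`η` about `e` and `g̃₀⁻¹`, independently of `g` and `r`. For small `η` these balls are disjoint by
the quasi-triangle inequality, and by continuity of `K` at the off-diagonal point `(e, g̃₀⁻¹)`,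
where `K(e, g̃₀⁻¹) = K(g̃₀, e) ≠ 0`, `K` stays within `|K(g̃₀, e)|/2` of that value on their
product.
-/

open Filter Topology

section Dilation

variable {G : Type*} {δ : ℝ → G → G}

lemma dilation_dilation_inv
    (hδ_comp : ∀ r s : ℝ, 0 < r → 0 < s → ∀ g : G, δ r (δ s g) = δ (r * s) g)
    (hδ_one : ∀ g : G, δ 1 g = g) {r : ℝ} (hr : 0 < r) (x : G) : δ r (δ r⁻¹ x) = x := by
  rw [hδ_comp r r⁻¹ hr (inv_pos.mpr hr), mul_inv_cancel₀ hr.ne', hδ_one]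

lemma dilation_inv_dilation
    (hδ_comp : ∀ r s : ℝ, 0 < r → 0 < s → ∀ g : G, δ r (δ s g) = δ (r * s) g)
    (hδ_one : ∀ g : G, δ 1 g = g) {r : ℝ} (hr : 0 < r) (x : G) : δ r⁻¹ (δ r x) = x := by
  rw [hδ_comp r⁻¹ r (inv_pos.mpr hr) hr, inv_mul_cancel₀ hr.ne', hδ_one]

variable [Group G]

lemma dilation_one (hδ_mul : ∀ r : ℝ, 0 < r → ∀ g h : G, δ r (g * h) = δ r g * δ r h)
    {r : ℝ} (hr : 0 < r) : δ r 1 = 1 :=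
  (MonoidHom.mk' (δ r) (hδ_mul r hr)).map_one

lemma dilation_inv (hδ_mul : ∀ r : ℝ, 0 < r → ∀ g h : G, δ r (g * h) = δ r g * δ r h)
    {r : ℝ} (hr : 0 < r) (x : G) : δ r x⁻¹ = (δ r x)⁻¹ :=
  (MonoidHom.mk' (δ r) (hδ_mul r hr)).map_inv x

noncomputable def rescale (δ : ℝ → G → G) (g : G) (r : ℝ) (x : G) : G := δ r⁻¹ (g⁻¹ * x)

lemma rescale_self (hδ_mul : ∀ r : ℝ, 0 < r → ∀ g h : G, δ r (g * h) = δ r g * δ r h)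
    {r : ℝ} (hr : 0 < r) (g : G) : rescale δ g r g = 1 := by
  rw [rescale, inv_mul_cancel, dilation_one hδ_mul (inv_pos.mpr hr)]

lemma rescale_mul_dilation (hδ_comp : ∀ r s : ℝ, 0 < r → 0 < s → ∀ g : G, δ r (δ s g) = δ (r * s) g)
    (hδ_one : ∀ g : G, δ 1 g = g) {r : ℝ} (hr : 0 < r) (g b : G) :
    rescale δ g r (g * δ r b) = b := by
  rw [rescale, inv_mul_cancel_left, dilation_inv_dilation hδ_comp hδ_one hr]

lemma inv_rescale_mul_rescale (hδ_mul : ∀ r : ℝ, 0 < r → ∀ g h : G, δ r (g * h) = δ r g * δ r h)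
    {r : ℝ} (hr : 0 < r) (g x y : G) :
    (rescale δ g r x)⁻¹ * rescale δ g r y = δ r⁻¹ (x⁻¹ * y) := by
  rw [rescale, rescale, ← dilation_inv hδ_mul (inv_pos.mpr hr), ← hδ_mul _ (inv_pos.mpr hr)]
  group

lemma rho_inv_rescale_mul_rescale {ρ : G → ℝ}
    (hδ_mul : ∀ r : ℝ, 0 < r → ∀ g h : G, δ r (g * h) = δ r g * δ r h)
    (hρ_homog : ∀ r : ℝ, 0 < r → ∀ g, ρ (δ r g) = r * ρ g) {r : ℝ} (hr : 0 < r) (g x y : G) :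
    ρ ((rescale δ g r x)⁻¹ * rescale δ g r y) = r⁻¹ * ρ (x⁻¹ * y) := by
  rw [inv_rescale_mul_rescale hδ_mul hr, hρ_homog _ (inv_pos.mpr hr)]

lemma rho_inv_rescale_mul_rescale_lt {ρ : G → ℝ}
    (hδ_mul : ∀ r : ℝ, 0 < r → ∀ g h : G, δ r (g * h) = δ r g * δ r h)
    (hρ_homog : ∀ r : ℝ, 0 < r → ∀ g, ρ (δ r g) = r * ρ g) {r η : ℝ} (hr : 0 < r) (g : G) {x y : G}
    (h : ρ (x⁻¹ * y) < η * r) : ρ ((rescale δ g r x)⁻¹ * rescale δ g r y) < η := by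
  rwa [rho_inv_rescale_mul_rescale hδ_mul hρ_homog hr, inv_mul_lt_iff₀ hr, mul_comm]

lemma kernel_eq_rpow_mul_rescale {K : G → G → ℝ} {Q : ℝ}
    (hδ_comp : ∀ r s : ℝ, 0 < r → 0 < s → ∀ g : G, δ r (δ s g) = δ (r * s) g)
    (hδ_one : ∀ g : G, δ 1 g = g)
    (hK_homog : ∀ r : ℝ, 0 < r → ∀ g₁ g₂ : G, K (δ r g₁) (δ r g₂) = r ^ (-Q) * K g₁ g₂)
    (hK_inv : ∀ h g₁ g₂ : G, K (h * g₁) (h * g₂) = K g₁ g₂) {r : ℝ} (hr : 0 < r) (g x y : G) :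
    K x y = r ^ (-Q) * K (rescale δ g r x) (rescale δ g r y) := by
  rw [rescale, rescale, ← hK_homog r hr, dilation_dilation_inv hδ_comp hδ_one hr,
    dilation_dilation_inv hδ_comp hδ_one hr, hK_inv]

end Dilation

section QuasiMetric

variable {G : Type*} [Group G] {ρ : G → ℝ}

lemma ne_of_rho_lt {C : ℝ} (hC : 0 < C) (hρ_inv : ∀ g, ρ g⁻¹ = ρ g)
    (hρ_quasi : ∀ g h : G, ρ (g * h) ≤ C * (ρ g + ρ h)) {a b x y : G} {η : ℝ}
    (hx : ρ (x⁻¹ * a) < η) (hy : ρ (y⁻¹ * b) < η) (hab : 2 * C * η ≤ ρ (a⁻¹ * b)) : x ≠ y := by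
  rintro rfl
  have h := hρ_quasi (x⁻¹ * a)⁻¹ (x⁻¹ * b)
  rw [hρ_inv, show (x⁻¹ * a)⁻¹ * (x⁻¹ * b) = a⁻¹ * b by group] at h
  nlinarith

lemma exists_pos_abs_sub_lt_of_continuousOn_offDiag [TopologicalSpace G]
    (hbasis : ∀ g : G, ∀ U ∈ 𝓝 g, ∃ s > 0, {h : G | ρ (h⁻¹ * g) < s} ⊆ U)
    {f : G → G → ℝ} (hf : ContinuousOn (fun p : G × G => f p.1 p.2) {p : G × G | p.1 ≠ p.2})
    {a b : G} (hab : a ≠ b) {ε : ℝ} (hε : 0 < ε) :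
    ∃ s > 0, ∀ x y : G, ρ (x⁻¹ * a) < s → ρ (y⁻¹ * b) < s → x ≠ y → |f x y - f a b| < ε := by
  have hnear : ∀ᶠ p in 𝓝[{p : G × G | p.1 ≠ p.2}] (a, b), |f p.1 p.2 - f a b| < ε :=
    hf (a, b) hab (Metric.ball_mem_nhds _ hε)
  rw [eventually_nhdsWithin_iff, nhds_prod_eq, eventually_prod_iff] at hnear
  obtain ⟨pa, hpa, pb, hpb, hprod⟩ := hnear
  obtain ⟨s₁, hs₁, hs₁a⟩ := hbasis a _ hpa
  obtain ⟨s₂, hs₂, hs₂b⟩ := hbasis b _ hpb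
  refine ⟨min s₁ s₂, lt_min hs₁ hs₂, fun x y hx hy hxy => hprod ?_ ?_ hxy⟩
  · exact hs₁a (hx.trans_le (min_le_left _ _))
  · exact hs₂b (hy.trans_le (min_le_right _ _))

end QuasiMetric

lemma half_abs_le_abs_of_abs_sub_lt {k L : ℝ} (h : |k - L| < |L| / 2) : |L| / 2 ≤ |k| := by
  have := abs_sub_abs_le_abs_sub L k
  rw [abs_sub_comm] at this
  linarith

lemma mul_pos_of_abs_sub_lt_half {k L : ℝ} (h : |k - L| < |L| / 2) : 0 < k * L := by
  rcases abs_lt.mp h with ⟨h₁, h₂⟩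
  rcases le_or_gt 0 L with hL | hL
  · rw [abs_of_nonneg hL] at h₁ h₂; nlinarith
  · rw [abs_of_neg hL] at h₁ h₂; nlinarith

lemma abs_lower_bound_and_sign_of_abs_sub_lt_half {α β : Type*} {S : Set α} {T : Set β}
    {F : α → β → ℝ} {a L : ℝ} (ha : 0 < a) (hL : L ≠ 0)
    (hF : ∀ x ∈ S, ∀ y ∈ T, ∃ k, F x y = a * k ∧ |k - L| < |L| / 2) :
    (∀ x ∈ S, ∀ y ∈ T, |L| / 2 * a ≤ |F x y|) ∧
      ((∀ x ∈ S, ∀ y ∈ T, 0 < F x y) ∨ (∀ x ∈ S, ∀ y ∈ T, F x y < 0)) := by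
  have hsign : ∀ x ∈ S, ∀ y ∈ T, 0 < F x y * L := fun x hx y hy => by
    obtain ⟨k, hk_eq, hk⟩ := hF x hx y hy
    rw [hk_eq, mul_assoc]
    exact mul_pos ha (mul_pos_of_abs_sub_lt_half hk)
  refine ⟨fun x hx y hy => ?_, ?_⟩
  · obtain ⟨k, hk_eq, hk⟩ := hF x hx y hy
    rw [hk_eq, abs_mul, abs_of_pos ha, mul_comm]
    exact mul_le_mul_of_nonneg_left (half_abs_le_abs_of_abs_sub_lt hk) ha.le
  · rcases hL.lt_or_gt with hneg | hpos
    · exact Or.inr fun x hx y hy => neg_of_mul_pos_left (hsign x hx y hy) hneg.le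
    · exact Or.inl fun x hx y hy => pos_of_mul_pos_left (hsign x hx y hy) hpos.le

theorem kernel_lower_bound_general {G : Type*} [Group G] [TopologicalSpace G]
    (δ : ℝ → G → G) (ρ : G → ℝ) (Q : ℝ)
    (hδ_mul : ∀ r : ℝ, 0 < r → ∀ g h : G, δ r (g * h) = δ r g * δ r h)
    (hδ_comp : ∀ r s : ℝ, 0 < r → 0 < s → ∀ g : G, δ r (δ s g) = δ (r * s) g)
    (hδ_one : ∀ g : G, δ 1 g = g)
    (hρ_inv : ∀ g, ρ g⁻¹ = ρ g)
    (hρ_homog : ∀ r : ℝ, 0 < r → ∀ g, ρ (δ r g) = r * ρ g)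
    (hρ_zero : ∀ g, ρ g = 0 ↔ g = 1)
    (C : ℝ) (hC : 1 ≤ C) (hρ_quasi : ∀ g h : G, ρ (g * h) ≤ C * (ρ g + ρ h))
    (hbasis : ∀ g : G, ∀ U ∈ nhds g, ∃ s > 0, {h : G | ρ (h⁻¹ * g) < s} ⊆ U)
    (K : G → G → ℝ)
    (hK_homog : ∀ r : ℝ, 0 < r → ∀ g₁ g₂ : G, K (δ r g₁) (δ r g₂) = r ^ (-Q) * K g₁ g₂)
    (hK_inv : ∀ h g₁ g₂ : G, K (h * g₁) (h * g₂) = K g₁ g₂)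
    (hK_cont : ContinuousOn (fun p : G × G => K p.1 p.2) {p : G × G | p.1 ≠ p.2})
    (g₀ : G) (hg₀_norm : ρ g₀ = 1) (hg₀ : K g₀ 1 ≠ 0) :
    ∃ ε₀ > (0 : ℝ), ∃ c > (0 : ℝ), ∀ η : ℝ, 0 < η → η ≤ ε₀ →
      ∀ (g : G) (r : ℝ), 0 < r →
        ∃ gs : G, gs = g * δ r g₀⁻¹ ∧ ρ (gs⁻¹ * g) = r ∧
          (∀ g₁ ∈ {h : G | ρ (h⁻¹ * g) < η * r}, ∀ g₂ ∈ {h : G | ρ (h⁻¹ * gs) < η * r},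
            c * r ^ (-Q) ≤ |K g₁ g₂|) ∧
          ((∀ g₁ ∈ {h : G | ρ (h⁻¹ * g) < η * r}, ∀ g₂ ∈ {h : G | ρ (h⁻¹ * gs) < η * r},
              0 < K g₁ g₂) ∨
           (∀ g₁ ∈ {h : G | ρ (h⁻¹ * g) < η * r}, ∀ g₂ ∈ {h : G | ρ (h⁻¹ * gs) < η * r},
              K g₁ g₂ < 0)) := by
  have hρ_g₀_inv : ρ g₀⁻¹ = 1 := by rw [hρ_inv, hg₀_norm]
  have hL : K 1 g₀⁻¹ = K g₀ 1 := by simpa using (hK_inv g₀ 1 g₀⁻¹).symm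
  have h_offDiag : (1 : G) ≠ g₀⁻¹ := fun h => by
    simp [← h, (hρ_zero 1).mpr rfl] at hρ_g₀_inv
  obtain ⟨s, hs, hclose⟩ := exists_pos_abs_sub_lt_of_continuousOn_offDiag hbasis hK_cont
    h_offDiag (half_pos (abs_pos.mpr hg₀))
  have hC0 : 0 < C := by linarith
  refine ⟨min s (1 / (2 * C)), by positivity, |K g₀ 1| / 2, by positivity,
    fun η _ hηε g r hr => ?_⟩
  have hrQ : 0 < r ^ (-Q) := Real.rpow_pos_of_pos hr _
  set gs := g * δ r g₀⁻¹
  have hkey : ∀ g₁ ∈ {h : G | ρ (h⁻¹ * g) < η * r}, ∀ g₂ ∈ {h : G | ρ (h⁻¹ * gs) < η * r},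
      ∃ k, K g₁ g₂ = r ^ (-Q) * k ∧ |k - K g₀ 1| < |K g₀ 1| / 2 := by
    intro g₁ h₁ g₂ h₂
    have hu : ρ ((rescale δ g r g₁)⁻¹ * 1) < η := by
      simpa only [rescale_self hδ_mul hr g]
        using rho_inv_rescale_mul_rescale_lt hδ_mul hρ_homog hr g h₁
    have hv : ρ ((rescale δ g r g₂)⁻¹ * g₀⁻¹) < η := by
      simpa only [gs, rescale_mul_dilation hδ_comp hδ_one hr g g₀⁻¹]
        using rho_inv_rescale_mul_rescale_lt hδ_mul hρ_homog hr g h₂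
    have hη_small : 2 * C * η ≤ ρ (1⁻¹ * g₀⁻¹) := by
      rw [inv_one, one_mul, hρ_g₀_inv, mul_comm]
      exact (le_div_iff₀ (by positivity)).mp (hηε.trans (min_le_right _ _))
    have hne := ne_of_rho_lt hC0 hρ_inv hρ_quasi hu hv hη_small
    refine ⟨_, kernel_eq_rpow_mul_rescale hδ_comp hδ_one hK_homog hK_inv hr g g₁ g₂, ?_⟩
    have hηs : η ≤ s := hηε.trans (min_le_left _ _)
    exact hL ▸ hclose _ _ (hu.trans_le hηs) (hv.trans_le hηs) hne
  refine ⟨gs, rfl, ?_, abs_lower_bound_and_sign_of_abs_sub_lt_half hrQ hg₀ hkey⟩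
  rw [show gs⁻¹ * g = (δ r g₀⁻¹)⁻¹ by simp [gs], hρ_inv, hρ_homog r hr, hρ_g₀_inv, mul_one]

/-- lower bound for a homogeneous, left-invariant kernel. If
`K(δ_r g₁, δ_r g₂) = r^{-Q} K(g₁,g₂)`, `K(hg₁,hg₂) = K(g₁,g₂)`, `K` is continuous off
the diagonal and `K(g̃₀, e) ≠ 0` for some `g̃₀` with `ρ(g̃₀) = 1`, then there are
`ε₀ > 0` and `c > 0` such that for all `0 < η ≤ ε₀`, `g ∈ G`, `r > 0`, the point
`g_* = g ∘ δ_r(g̃₀⁻¹)` satisfies `ρ(g, g_*) = r`, `|K(g₁,g₂)| ≥ c r^{-Q}` on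
`B(g,ηr) × B(g_*,ηr)`, and `K` has constant sign there. -/
theorem kernel_lower_bound {G : Type*} [Group G] [TopologicalSpace G] [IsTopologicalGroup G]
    (δ : ℝ → G → G) (ρ : G → ℝ) (Q : ℝ) (hQ : 0 < Q)
    (hδ_mul : ∀ r : ℝ, 0 < r → ∀ g h : G, δ r (g * h) = δ r g * δ r h)
    (hδ_comp : ∀ r s : ℝ, 0 < r → 0 < s → ∀ g : G, δ r (δ s g) = δ (r * s) g)
    (hδ_one : ∀ g : G, δ 1 g = g)
    (hρ_nonneg : ∀ g, 0 ≤ ρ g)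
    (hρ_inv : ∀ g, ρ g⁻¹ = ρ g)
    (hρ_homog : ∀ r : ℝ, 0 < r → ∀ g, ρ (δ r g) = r * ρ g)
    (hρ_zero : ∀ g, ρ g = 0 ↔ g = 1)
    (C : ℝ) (hC : 1 ≤ C) (hρ_quasi : ∀ g h : G, ρ (g * h) ≤ C * (ρ g + ρ h))
    (hρ_cont : Continuous ρ)
    (hbasis : ∀ g : G, ∀ U ∈ nhds g, ∃ s > 0, {h : G | ρ (h⁻¹ * g) < s} ⊆ U)
    (K : G → G → ℝ)
    (hK_homog : ∀ r : ℝ, 0 < r → ∀ g₁ g₂ : G, K (δ r g₁) (δ r g₂) = r ^ (-Q) * K g₁ g₂)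
    (hK_inv : ∀ h g₁ g₂ : G, K (h * g₁) (h * g₂) = K g₁ g₂)
    (hK_cont : ContinuousOn (fun p : G × G => K p.1 p.2) {p : G × G | p.1 ≠ p.2})
    (g₀ : G) (hg₀_norm : ρ g₀ = 1) (hg₀ : K g₀ 1 ≠ 0) :
    ∃ ε₀ > (0 : ℝ), ∃ c > (0 : ℝ), ∀ η : ℝ, 0 < η → η ≤ ε₀ →
      ∀ (g : G) (r : ℝ), 0 < r →
        ∃ gs : G, gs = g * δ r g₀⁻¹ ∧ ρ (gs⁻¹ * g) = r ∧
          (∀ g₁ ∈ {h : G | ρ (h⁻¹ * g) < η * r}, ∀ g₂ ∈ {h : G | ρ (h⁻¹ * gs) < η * r},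
            c * r ^ (-Q) ≤ |K g₁ g₂|) ∧
          ((∀ g₁ ∈ {h : G | ρ (h⁻¹ * g) < η * r}, ∀ g₂ ∈ {h : G | ρ (h⁻¹ * gs) < η * r},
              0 < K g₁ g₂) ∨
           (∀ g₁ ∈ {h : G | ρ (h⁻¹ * g) < η * r}, ∀ g₂ ∈ {h : G | ρ (h⁻¹ * gs) < η * r},
              K g₁ g₂ < 0)) :=
  kernel_lower_bound_general δ ρ Q hδ_mul hδ_comp hδ_one hρ_inv hρ_homog hρ_zero C hC hρ_quasi
    hbasis K hK_homog hK_inv hK_cont g₀ hg₀_norm hg₀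
end
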